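/- On S̃³ = ∂(𝔻²×𝔻²), the matrix function fᴱ defined by fᴱ(z,w) = [[z, −w⁻¹],[−w|z|² + 2w, z̄]] for (z,w) ∈ 𝔻²×𝕋 and fᴱ(z,w) = [[−z|w|² + 2z, −w̄],[w, z⁻¹]] for (z,w) ∈ 𝕋×𝔻² is well-defined (the two formulas agree on 𝕋²), continuous, and invertible at every point; moreover fᴱ is homotopic through continuous maps S̃³ → GL₂(ℂ) to g(z,w) = [[z, −w̄],[w, z̄]]. -/

import Mathlib

/-- The three-sphere `S̃³ = ∂(𝔻² × 𝔻²) = (𝔻² × 𝕋) ∪ (𝕋 × 𝔻²) ⊂ ℂ²`. -/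
def SThree : Set (ℂ × ℂ) := {p : ℂ × ℂ | max ‖p.1‖ ‖p.2‖ = 1}

/-- The formula for `fᴱ` on the piece `𝔻² × 𝕋`. -/
noncomputable def fEdiskCirc (p : ℂ × ℂ) : Matrix (Fin 2) (Fin 2) ℂ :=
  !![p.1, -p.2⁻¹; -p.2 * (‖p.1‖ : ℂ) ^ 2 + 2 * p.2, starRingEnd ℂ p.1]

/-- The formula for `fᴱ` on the piece `𝕋 × 𝔻²`. -/
noncomputable def fEcircDisk (p : ℂ × ℂ) : Matrix (Fin 2) (Fin 2) ℂ :=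
  !![-p.1 * (‖p.2‖ : ℂ) ^ 2 + 2 * p.1, -(starRingEnd ℂ p.2); p.2, p.1⁻¹]

open Classical in
/-- The glued map `fᴱ` on `S̃³`, given by the first formula on `𝔻² × 𝕋` and by the second
on `𝕋 × 𝔻²`. -/
noncomputable def fE (p : ℂ × ℂ) : Matrix (Fin 2) (Fin 2) ℂ :=
  if ‖p.2‖ = 1 then fEdiskCirc p else fEcircDisk p

/-- The map `g(z,w) = [[z, −w̄],[w, z̄]]`. -/
def gBott (p : ℂ × ℂ) : Matrix (Fin 2) (Fin 2) ℂ :=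
  !![p.1, -(starRingEnd ℂ p.2); p.2, starRingEnd ℂ p.1]

/-! A single formula `F t` on all of `ℂ²` interpolates linearly between `g = F 0` and `fᴱ = F 1`:
the factor `1 - |w|²` (resp. `1 - |z|²`) switches the `(1,1)` (resp. `(2,1)`) deformation
off on `𝔻² × 𝕋` (resp. `𝕋 × 𝔻²`), so `F 1` restricts to both defining formulas of `fᴱ`,
which therefore agree on `𝕋²`. On the closed bidisk and for `t ≥ 0` both correction factors
are `≥ 1`, so `det F t (z, w) ≥ |z|² + |w|²`, which is positive on `S̃³`. -/

open ComplexConjugate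

noncomputable def fEHomotopy (t : ℝ) (p : ℂ × ℂ) : Matrix (Fin 2) (Fin 2) ℂ :=
  !![p.1 * (1 + t * (1 - (‖p.2‖ : ℂ) ^ 2)), -conj p.2;
     p.2 * (1 + t * (1 - (‖p.1‖ : ℂ) ^ 2)), conj p.1]

theorem continuous_fEHomotopy : Continuous fun q : ℝ × (ℂ × ℂ) => fEHomotopy q.1 q.2 := by
  refine continuous_matrix fun i j => ?_
  fin_cases i <;> fin_cases j <;> simp [fEHomotopy] <;> fun_prop

theorem fEHomotopy_zero : fEHomotopy 0 = gBott := by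
  ext p i j
  fin_cases i <;> fin_cases j <;> simp [fEHomotopy, gBott]

theorem fEHomotopy_one_of_norm_snd_eq_one {p : ℂ × ℂ} (hw : ‖p.2‖ = 1) :
    fEHomotopy 1 p = fEdiskCirc p := by
  ext i j
  fin_cases i <;> fin_cases j <;>
    simp [fEHomotopy, fEdiskCirc, hw, Complex.inv_eq_conj hw]
  ring

theorem fEHomotopy_one_of_norm_fst_eq_one {p : ℂ × ℂ} (hz : ‖p.1‖ = 1) :
    fEHomotopy 1 p = fEcircDisk p := by
  ext i j
  fin_cases i <;> fin_cases j <;>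
    simp [fEHomotopy, fEcircDisk, hz, Complex.inv_eq_conj hz]
  ring

theorem norm_le_one_and_norm_le_one_of_mem_SThree {p : ℂ × ℂ} (hp : p ∈ SThree) :
    ‖p.1‖ ≤ 1 ∧ ‖p.2‖ ≤ 1 :=
  max_le_iff.mp hp.le

theorem norm_fst_eq_one_or_norm_snd_eq_one_of_mem_SThree {p : ℂ × ℂ} (hp : p ∈ SThree) :
    ‖p.1‖ = 1 ∨ ‖p.2‖ = 1 :=
  (max_choice ‖p.1‖ ‖p.2‖).imp (fun h => h.symm.trans hp) (fun h => h.symm.trans hp)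

theorem fEHomotopy_one_eqOn : Set.EqOn (fEHomotopy 1) fE SThree := by
  intro p hp
  rw [fE]
  split_ifs with hw
  · exact fEHomotopy_one_of_norm_snd_eq_one hw
  · exact fEHomotopy_one_of_norm_fst_eq_one <|
      (norm_fst_eq_one_or_norm_snd_eq_one_of_mem_SThree hp).resolve_right hw

theorem det_fEHomotopy (t : ℝ) (p : ℂ × ℂ) :
    (fEHomotopy t p).det =
      ((‖p.1‖ ^ 2 * (1 + t * (1 - ‖p.2‖ ^ 2)) + ‖p.2‖ ^ 2 * (1 + t * (1 - ‖p.1‖ ^ 2)) : ℝ) : ℂ) := by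
  rw [fEHomotopy, Matrix.det_fin_two_of]
  push_cast
  linear_combination (1 + (t : ℂ) * (1 - (‖p.2‖ : ℂ) ^ 2)) * Complex.mul_conj' p.1 +
    (1 + (t : ℂ) * (1 - (‖p.1‖ : ℂ) ^ 2)) * Complex.mul_conj' p.2

theorem isUnit_fEHomotopy {t : ℝ} (ht : 0 ≤ t) {p : ℂ × ℂ} (hz : ‖p.1‖ ≤ 1) (hw : ‖p.2‖ ≤ 1)
    (hp : p ≠ 0) : IsUnit (fEHomotopy t p) := by
  rw [Matrix.isUnit_iff_isUnit_det, isUnit_iff_ne_zero, det_fEHomotopy, Ne,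
    Complex.ofReal_eq_zero]
  have hcorr₁ : 1 ≤ 1 + t * (1 - ‖p.2‖ ^ 2) :=
    le_add_of_nonneg_right (mul_nonneg ht (sub_nonneg.2 (pow_le_one₀ (norm_nonneg _) hw)))
  have hcorr₂ : 1 ≤ 1 + t * (1 - ‖p.1‖ ^ 2) :=
    le_add_of_nonneg_right (mul_nonneg ht (sub_nonneg.2 (pow_le_one₀ (norm_nonneg _) hz)))
  have hpos : 0 < ‖p.1‖ ^ 2 + ‖p.2‖ ^ 2 := by
    rw [Ne, Prod.ext_iff, not_and_or] at hp
    rcases hp with h | h <;> positivity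
  nlinarith [sq_nonneg ‖p.1‖, sq_nonneg ‖p.2‖]

theorem isUnit_fEHomotopy_of_mem_SThree {t : ℝ} (ht : 0 ≤ t) {p : ℂ × ℂ} (hp : p ∈ SThree) :
    IsUnit (fEHomotopy t p) := by
  obtain ⟨hz, hw⟩ := norm_le_one_and_norm_le_one_of_mem_SThree hp
  refine isUnit_fEHomotopy ht hz hw fun h0 => ?_
  simp [SThree, h0] at hp

/-- The extended symbol `fᴱ` on `S̃³ = ∂(𝔻²×𝔻²)` is well defined (the two defining
formulas agree on `𝕋²`), continuous, invertible at every point, and homotopic through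
continuous invertible-matrix-valued maps on `S̃³` to `g(z,w) = [[z, −w̄],[w, z̄]]`. -/
theorem fE_welldef_invertible_homotopic_to_g :
    (∀ p : ℂ × ℂ, ‖p.1‖ = 1 → ‖p.2‖ = 1 → fEdiskCirc p = fEcircDisk p) ∧
    ContinuousOn fE SThree ∧
    (∀ p ∈ SThree, IsUnit (fE p)) ∧
    ∃ F : ℝ → ℂ × ℂ → Matrix (Fin 2) (Fin 2) ℂ,
      ContinuousOn (fun q : ℝ × (ℂ × ℂ) => F q.1 q.2) (Set.Icc (0 : ℝ) 1 ×ˢ SThree) ∧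
      (∀ p ∈ SThree, F 1 p = fE p) ∧
      (∀ p ∈ SThree, F 0 p = gBott p) ∧
      (∀ t ∈ Set.Icc (0 : ℝ) 1, ∀ p ∈ SThree, IsUnit (F t p)) := by
  have hcont₁ : Continuous (fEHomotopy 1) :=
    continuous_fEHomotopy.comp (Continuous.prodMk_right 1)
  refine ⟨fun p hz hw => ?_, hcont₁.continuousOn.congr fEHomotopy_one_eqOn.symm,
    fun p hp => fEHomotopy_one_eqOn hp ▸ isUnit_fEHomotopy_of_mem_SThree zero_le_one hp,
    fEHomotopy, continuous_fEHomotopy.continuousOn, fun p hp => fEHomotopy_one_eqOn hp,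
    fun p _ => by rw [fEHomotopy_zero], fun t ht p hp => isUnit_fEHomotopy_of_mem_SThree ht.1 hp⟩
  rw [← fEHomotopy_one_of_norm_snd_eq_one hw, fEHomotopy_one_of_norm_fst_eq_one hz]
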